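/- Let 0 < α₁ ≤ 1, p > 0, λ_k > 0, and suppose |f_k(t)| ≤ M/λ_k^{7/2} for all t ∈ [0,T]. Assume the Mittag-Leffler bound |E_{α₁,2α₁}(-z)| ≤ M*/(1+z) for z ≥ 0. Then G_k(t) := (1/(p^{α₁}Γ(α₁))) ∫₀ᵗ (t^p - τ^p)^{α₁-1} f_k(τ) d(τ^p) - (λ_k²/p^{2α₁}) ∫₀ᵗ (t^p - τ^p)^{2α₁-1} E_{α₁,2α₁}(-(λ_k²/p^{α₁})(t^p-τ^p)^{α₁}) f_k(τ) d(τ^p) satisfies |G_k(t)| ≤ (M₁/λ_k^{7/2}) t^{α₁ p} for all t ∈ [0,T], where M₁ = M/(p^{α₁}Γ(α₁+1)) + M*M/(α₁ p^{α₁}). -/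

import Mathlib

open MeasureTheory Set intervalIntegral
open scoped Interval

lemma key_int (α p t : ℝ) (hα : 0 < α) (hp : 0 < p) (ht : 0 < t) :
    IntervalIntegrable (fun τ => (t ^ p - τ ^ p) ^ (α - 1) * (p * τ ^ (p - 1))) volume 0 t ∧
    (∫ τ in (0:ℝ)..t, (t ^ p - τ ^ p) ^ (α - 1) * (p * τ ^ (p - 1))) = t ^ (p * α) / α := by
  set g : ℝ → ℝ := fun τ => -(t ^ p - τ ^ p) ^ α / α with hg
  have hcont : ContinuousOn g (Icc 0 t) := by
    apply Continuous.continuousOn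
    have h1 : Continuous fun τ : ℝ => t ^ p - τ ^ p :=
      continuous_const.sub (Real.continuous_rpow_const hp.le)
    exact ((Real.continuous_rpow_const hα.le).comp h1).neg.div_const α
  have hderiv : ∀ x ∈ Ioo (0:ℝ) t,
      HasDerivAt g ((t ^ p - x ^ p) ^ (α - 1) * (p * x ^ (p - 1))) x := by
    intro x hx
    have hxpos : 0 < x := hx.1
    have hs : 0 < t ^ p - x ^ p := by
      have := Real.rpow_lt_rpow hxpos.le hx.2 hp
      linarith
    have h1 : HasDerivAt (fun τ : ℝ => t ^ p - τ ^ p) (-(p * x ^ (p - 1))) x :=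
      (Real.hasDerivAt_rpow_const (Or.inl hxpos.ne')).const_sub _
    have h2 : HasDerivAt (fun y : ℝ => y ^ α) (α * (t ^ p - x ^ p) ^ (α - 1)) (t ^ p - x ^ p) :=
      Real.hasDerivAt_rpow_const (Or.inl hs.ne')
    have h3 := (h2.comp x h1).neg.div_const α
    refine h3.congr_deriv ?_
    rw [div_eq_iff hα.ne']
    ring
  have hpos : ∀ x ∈ Ioo (0:ℝ) t, 0 ≤ (t ^ p - x ^ p) ^ (α - 1) * (p * x ^ (p - 1)) := by
    intro x hx
    have hs : (0:ℝ) ≤ t ^ p - x ^ p := by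
      have := Real.rpow_le_rpow hx.1.le hx.2.le hp.le
      linarith
    have h1 : (0:ℝ) ≤ (t ^ p - x ^ p) ^ (α - 1) := Real.rpow_nonneg hs _
    have h2 : (0:ℝ) ≤ x ^ (p - 1) := Real.rpow_nonneg hx.1.le _
    positivity
  have hint : IntegrableOn (fun x => (t ^ p - x ^ p) ^ (α - 1) * (p * x ^ (p - 1)))
      (Ioc 0 t) volume := integrableOn_deriv_of_nonneg hcont hderiv hpos
  have hii : IntervalIntegrable (fun τ => (t ^ p - τ ^ p) ^ (α - 1) * (p * τ ^ (p - 1)))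
      volume 0 t := (intervalIntegrable_iff_integrableOn_Ioc_of_le ht.le).2 hint
  refine ⟨hii, ?_⟩
  have := integral_eq_sub_of_hasDeriv_right_of_le ht.le hcont
    (fun x hx => (hderiv x hx).hasDerivWithinAt) hii
  rw [this]
  have h0 : (0:ℝ) ^ p = 0 := Real.zero_rpow hp.ne'
  have htt : t ^ p - t ^ p = 0 := sub_self _
  simp only [hg, htt, h0, sub_zero]
  rw [Real.zero_rpow hα.ne', ← Real.rpow_mul ht.le]
  ring

/-- The two-parameter Mittag-Leffler function on ℝ. -/
noncomputable def mittagLeffler (a b x : ℝ) : ℝ :=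
  ∑' n : ℕ, x ^ n / Real.Gamma (a * n + b)

theorem stmt_10 (α₁ p lamk M Ms T : ℝ)
    (hα0 : 0 < α₁) (hα1 : α₁ ≤ 1) (hp : 0 < p) (hl : 0 < lamk) (hT : 0 < T)
    (f : ℝ → ℝ)
    (hf : ∀ t ∈ Set.Icc (0:ℝ) T, |f t| ≤ M / lamk ^ (7/2 : ℝ))
    (hml : ∀ z : ℝ, 0 ≤ z → |mittagLeffler α₁ (2 * α₁) (-z)| ≤ Ms / (1 + z)) :
    ∀ t ∈ Set.Icc (0:ℝ) T,
      |(1 / (p ^ α₁ * Real.Gamma α₁)) *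
          (∫ τ in (0:ℝ)..t, (t ^ p - τ ^ p) ^ (α₁ - 1) * f τ * (p * τ ^ (p - 1)))
        - (lamk ^ 2 / p ^ (2 * α₁)) *
          (∫ τ in (0:ℝ)..t, (t ^ p - τ ^ p) ^ (2 * α₁ - 1) *
            mittagLeffler α₁ (2 * α₁) (-(lamk ^ 2 / p ^ α₁) * (t ^ p - τ ^ p) ^ α₁) * f τ *
            (p * τ ^ (p - 1)))|
      ≤ (M / (p ^ α₁ * Real.Gamma (α₁ + 1)) + Ms * M / (α₁ * p ^ α₁)) / lamk ^ (7/2 : ℝ)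
          * t ^ (α₁ * p) := by
  have hlam : (0:ℝ) < lamk ^ (7/2 : ℝ) := Real.rpow_pos_of_pos hl _
  have hC : (0:ℝ) ≤ M / lamk ^ (7/2 : ℝ) := (abs_nonneg _).trans (hf 0 ⟨le_rfl, hT.le⟩)
  have hM : (0:ℝ) ≤ M := by
    have := (div_nonneg_iff.1 hC)
    rcases this with h | h
    · exact h.1
    · nlinarith [h.2, hlam]
  have hMs : (0:ℝ) ≤ Ms := by
    have h := (abs_nonneg _).trans (hml 0 le_rfl)
    simpa using h
  have hpα : (0:ℝ) < p ^ α₁ := Real.rpow_pos_of_pos hp _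
  have hΓ : (0:ℝ) < Real.Gamma α₁ := Real.Gamma_pos_of_pos hα0
  set C := M / lamk ^ (7/2 : ℝ) with hCdef
  intro t ht
  obtain ⟨ht0, htT⟩ := ht
  rcases eq_or_lt_of_le ht0 with rfl | htpos
  · simp [Real.zero_rpow (by positivity : α₁ * p ≠ 0)]
  obtain ⟨hii, hval⟩ := key_int α₁ p t hα0 hp htpos
  -- bound for the first integral
  have hB1 : IntervalIntegrable
      (fun τ => C * ((t ^ p - τ ^ p) ^ (α₁ - 1) * (p * τ ^ (p - 1)))) volume 0 t :=
    hii.const_mul C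
  have hB1val : (∫ τ in (0:ℝ)..t, C * ((t ^ p - τ ^ p) ^ (α₁ - 1) * (p * τ ^ (p - 1))))
      = C * (t ^ (p * α₁) / α₁) := by
    rw [intervalIntegral.integral_const_mul, hval]
  have hIoc : Ι (0:ℝ) t = Ioc 0 t := Set.uIoc_of_le htpos.le
  have hbound1 : |∫ τ in (0:ℝ)..t, (t ^ p - τ ^ p) ^ (α₁ - 1) * f τ * (p * τ ^ (p - 1))|
      ≤ C * (t ^ (p * α₁) / α₁) := by
    have h := intervalIntegral.norm_integral_le_abs_of_norm_le (μ := volume) (a := 0) (b := t)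
      (f := fun τ => (t ^ p - τ ^ p) ^ (α₁ - 1) * f τ * (p * τ ^ (p - 1)))
      (g := fun τ => C * ((t ^ p - τ ^ p) ^ (α₁ - 1) * (p * τ ^ (p - 1)))) ?_ hB1
    · rw [hB1val] at h
      calc _ ≤ |C * (t ^ (p * α₁) / α₁)| := h
        _ = C * (t ^ (p * α₁) / α₁) := abs_of_nonneg (by positivity)
    · refine MeasureTheory.ae_restrict_of_forall_mem measurableSet_uIoc ?_
      intro τ hτ
      rw [hIoc] at hτ
      have hτ0 : 0 < τ := hτ.1
      have hs : (0:ℝ) ≤ t ^ p - τ ^ p := by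
        have := Real.rpow_le_rpow hτ0.le hτ.2 hp.le
        linarith
      have ha : (0:ℝ) ≤ (t ^ p - τ ^ p) ^ (α₁ - 1) := Real.rpow_nonneg hs _
      have hc : (0:ℝ) ≤ p * τ ^ (p - 1) := by
        have := Real.rpow_nonneg hτ0.le (p - 1); positivity
      have hfτ : |f τ| ≤ C := hf τ ⟨hτ0.le, hτ.2.trans htT⟩
      calc ‖(t ^ p - τ ^ p) ^ (α₁ - 1) * f τ * (p * τ ^ (p - 1))‖
          = (t ^ p - τ ^ p) ^ (α₁ - 1) * |f τ| * (p * τ ^ (p - 1)) := by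
            rw [Real.norm_eq_abs, abs_mul, abs_mul, abs_of_nonneg ha, abs_of_nonneg hc]
        _ ≤ (t ^ p - τ ^ p) ^ (α₁ - 1) * C * (p * τ ^ (p - 1)) := by gcongr
        _ = C * ((t ^ p - τ ^ p) ^ (α₁ - 1) * (p * τ ^ (p - 1))) := by ring
  -- bound for the second integral
  set K := Ms * (p ^ α₁ / lamk ^ 2) * C with hKdef
  have hK : 0 ≤ K := by positivity
  have hB2 : IntervalIntegrable
      (fun τ => K * ((t ^ p - τ ^ p) ^ (α₁ - 1) * (p * τ ^ (p - 1)))) volume 0 t :=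
    hii.const_mul K
  have hB2val : (∫ τ in (0:ℝ)..t, K * ((t ^ p - τ ^ p) ^ (α₁ - 1) * (p * τ ^ (p - 1))))
      = K * (t ^ (p * α₁) / α₁) := by
    rw [intervalIntegral.integral_const_mul, hval]
  have hbound2 : |∫ τ in (0:ℝ)..t, (t ^ p - τ ^ p) ^ (2 * α₁ - 1) *
        mittagLeffler α₁ (2 * α₁) (-(lamk ^ 2 / p ^ α₁) * (t ^ p - τ ^ p) ^ α₁) * f τ *
        (p * τ ^ (p - 1))|
      ≤ K * (t ^ (p * α₁) / α₁) := by
    have hne : ∀ᵐ τ : ℝ ∂(volume.restrict (Ι (0:ℝ) t)), τ ≠ t := by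
      refine MeasureTheory.ae_restrict_of_ae ?_
      refine MeasureTheory.ae_iff.2 ?_
      have : {x : ℝ | ¬ x ≠ t} = {t} := by ext x; simp
      rw [this]; exact Real.volume_singleton
    have hmem : ∀ᵐ τ : ℝ ∂(volume.restrict (Ι (0:ℝ) t)), τ ∈ Ι (0:ℝ) t :=
      MeasureTheory.ae_restrict_mem measurableSet_uIoc
    have h := intervalIntegral.norm_integral_le_abs_of_norm_le (μ := volume) (a := 0) (b := t)
      (f := fun τ => (t ^ p - τ ^ p) ^ (2 * α₁ - 1) *
        mittagLeffler α₁ (2 * α₁) (-(lamk ^ 2 / p ^ α₁) * (t ^ p - τ ^ p) ^ α₁) * f τ *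
        (p * τ ^ (p - 1)))
      (g := fun τ => K * ((t ^ p - τ ^ p) ^ (α₁ - 1) * (p * τ ^ (p - 1)))) ?_ hB2
    · rw [hB2val] at h
      calc _ ≤ |K * (t ^ (p * α₁) / α₁)| := h
        _ = K * (t ^ (p * α₁) / α₁) := abs_of_nonneg (by positivity)
    · filter_upwards [hne, hmem] with τ hτne hτ
      rw [hIoc] at hτ
      have hτ0 : 0 < τ := hτ.1
      have hτt : τ < t := lt_of_le_of_ne hτ.2 hτne
      have hs : (0:ℝ) < t ^ p - τ ^ p := by
        have := Real.rpow_lt_rpow hτ0.le hτt hp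
        linarith
      set s := t ^ p - τ ^ p with hsdef
      set cc := lamk ^ 2 / p ^ α₁ with hccdef
      have hcc : 0 < cc := by positivity
      have hz : (0:ℝ) ≤ cc * s ^ α₁ := by positivity
      have hE : |mittagLeffler α₁ (2 * α₁) (-cc * s ^ α₁)| ≤ Ms / (1 + cc * s ^ α₁) := by
        have := hml (cc * s ^ α₁) hz
        rw [neg_mul]; exact this
      have hc : (0:ℝ) ≤ p * τ ^ (p - 1) := by
        have := Real.rpow_nonneg hτ0.le (p - 1); positivity
      have hfτ : |f τ| ≤ C := hf τ ⟨hτ0.le, hτ.2.trans htT⟩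
      have hsplit : s ^ (2 * α₁ - 1) = s ^ (α₁ - 1) * s ^ α₁ := by
        rw [← Real.rpow_add hs]; ring_nf
      have hdenom : (0:ℝ) < 1 + cc * s ^ α₁ := by positivity
      have hkey : s ^ α₁ * (Ms / (1 + cc * s ^ α₁)) ≤ Ms / cc := by
        rw [← mul_div_assoc, div_le_div_iff₀ hdenom hcc]
        have hsa : (0:ℝ) ≤ s ^ α₁ := (Real.rpow_pos_of_pos hs _).le
        nlinarith [mul_nonneg hMs hsa]
      have ha1 : (0:ℝ) ≤ s ^ (α₁ - 1) := (Real.rpow_pos_of_pos hs _).le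
      calc ‖s ^ (2 * α₁ - 1) * mittagLeffler α₁ (2 * α₁) (-cc * s ^ α₁) * f τ *
            (p * τ ^ (p - 1))‖
          = s ^ (2 * α₁ - 1) * |mittagLeffler α₁ (2 * α₁) (-cc * s ^ α₁)| * |f τ| *
            (p * τ ^ (p - 1)) := by
            rw [Real.norm_eq_abs, abs_mul, abs_mul, abs_mul,
              abs_of_nonneg (Real.rpow_nonneg hs.le _), abs_of_nonneg hc]
        _ ≤ s ^ (2 * α₁ - 1) * (Ms / (1 + cc * s ^ α₁)) * C * (p * τ ^ (p - 1)) := by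
            gcongr
        _ = (s ^ (α₁ - 1) * (s ^ α₁ * (Ms / (1 + cc * s ^ α₁)))) * C * (p * τ ^ (p - 1)) := by
            rw [hsplit]; ring
        _ ≤ (s ^ (α₁ - 1) * (Ms / cc)) * C * (p * τ ^ (p - 1)) := by gcongr
        _ = (Ms / cc * C) * (s ^ (α₁ - 1) * (p * τ ^ (p - 1))) := by ring
        _ = K * (s ^ (α₁ - 1) * (p * τ ^ (p - 1))) := by
            rw [hKdef, hccdef, div_div_eq_mul_div]; ring
  -- assemble
  have habs : |(1 / (p ^ α₁ * Real.Gamma α₁)) *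
          (∫ τ in (0:ℝ)..t, (t ^ p - τ ^ p) ^ (α₁ - 1) * f τ * (p * τ ^ (p - 1)))
        - (lamk ^ 2 / p ^ (2 * α₁)) *
          (∫ τ in (0:ℝ)..t, (t ^ p - τ ^ p) ^ (2 * α₁ - 1) *
            mittagLeffler α₁ (2 * α₁) (-(lamk ^ 2 / p ^ α₁) * (t ^ p - τ ^ p) ^ α₁) * f τ *
            (p * τ ^ (p - 1)))|
      ≤ (1 / (p ^ α₁ * Real.Gamma α₁)) * (C * (t ^ (p * α₁) / α₁))
        + (lamk ^ 2 / p ^ (2 * α₁)) * (K * (t ^ (p * α₁) / α₁)) := by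
    refine (abs_sub _ _).trans ?_
    rw [abs_mul, abs_mul]
    have h1 : |1 / (p ^ α₁ * Real.Gamma α₁)| = 1 / (p ^ α₁ * Real.Gamma α₁) :=
      abs_of_nonneg (by positivity)
    have h2 : |lamk ^ 2 / p ^ (2 * α₁)| = lamk ^ 2 / p ^ (2 * α₁) :=
      abs_of_nonneg (by positivity)
    rw [h1, h2]
    gcongr
  refine habs.trans (le_of_eq ?_)
  rw [Real.Gamma_add_one hα0.ne']
  have hp2 : p ^ (2 * α₁) = p ^ α₁ * p ^ α₁ := by
    rw [← Real.rpow_add hp]; ring_nf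
  have htmul : t ^ (α₁ * p) = t ^ (p * α₁) := by ring_nf
  rw [hp2, htmul, hKdef, hCdef]
  field_simp
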